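/- Let L be the negative definite root lattice of A₁₇ ⊕ 2A₁ with A₁₇ chain e₁,…,e₁₇ and A₁ generators e₁₈, e₁₉, and N = ℤλ ⊕ L with λ² = 2. Let u = λ/2 + (Σ_{i=1}^{17} i·e_i)/2 and v = λ/2 + (Σ_{i=1}^{17} i·e_i)/6. Then both u and v pair integrally with N and have even square; moreover the overlattice N + ℤu has index 2 over N while N + ℤv has index 6 over N, so their discriminant groups have different orders. -/

import Mathlib

open Matrix

/-- Dynkin-diagram edges for A₁₇ ⊕ 2A₁ (index 0 reserved for λ):
A₁₇ chain e₁,…,e₁₇; A₁'s e₁₈, e₁₉. -/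
def adj : List (ℕ × ℕ) :=
  [(1,2),(2,3),(3,4),(4,5),(5,6),(6,7),(7,8),(8,9),(9,10),(10,11),(11,12),
   (12,13),(13,14),(14,15),(15,16),(16,17)]

/-- Gram matrix of N = ℤλ ⊕ L(A₁₇+2A₁): λ² = 2, roots of square −2. -/
def gramN : Matrix (Fin 20) (Fin 20) ℚ := fun i j =>
  if i = j then (if i.val = 0 then 2 else -2)
  else if (i.val, j.val) ∈ adj ∨ (j.val, i.val) ∈ adj then 1 else 0

/-- The bilinear form extended ℚ-bilinearly. -/
def form (x y : Fin 20 → ℚ) : ℚ := x ⬝ᵥ gramN.mulVec y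

/-- The lattice N: integer coordinate vectors. -/
def IntLat : AddSubgroup (Fin 20 → ℚ) where
  carrier := {x | ∀ i, ∃ k : ℤ, x i = (k : ℚ)}
  zero_mem' := fun i => ⟨0, by simp⟩
  add_mem' := by
    intro a b ha hb i
    obtain ⟨p, hp⟩ := ha i; obtain ⟨q, hq⟩ := hb i
    exact ⟨p + q, by simp [hp, hq]⟩
  neg_mem' := by
    intro a ha i
    obtain ⟨p, hp⟩ := ha i
    exact ⟨-p, by simp [hp]⟩

/-- The dual lattice M^∨ of a subgroup M (with respect to `form`). -/
def dualLat (M : AddSubgroup (Fin 20 → ℚ)) : AddSubgroup (Fin 20 → ℚ) where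
  carrier := {x | ∀ y ∈ M, ∃ k : ℤ, form x y = (k : ℚ)}
  zero_mem' := by
    intro y hy
    exact ⟨0, by simp [form]⟩
  add_mem' := by
    intro a b ha hb y hy
    obtain ⟨p, hp⟩ := ha y hy; obtain ⟨q, hq⟩ := hb y hy
    refine ⟨p + q, ?_⟩
    have h : form (a + b) y = form a y + form b y := by simp [form, add_dotProduct]
    rw [h, hp, hq]; push_cast; ring
  neg_mem' := by
    intro a ha y hy
    obtain ⟨p, hp⟩ := ha y hy
    refine ⟨-p, ?_⟩
    have h : form (-a) y = -form a y := by simp [form, neg_dotProduct]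
    rw [h, hp]; push_cast; ring

/-- The discriminant group M^∨/M. -/
abbrev disc (M : AddSubgroup (Fin 20 → ℚ)) :=
  dualLat M ⧸ M.addSubgroupOf (dualLat M)

/-- u = λ/2 + (Σ_{i=1}^{17} i·e_i)/2. -/
def u : Fin 20 → ℚ := fun j =>
  if j.val = 0 then 1/2 else if j.val ≤ 17 then (j.val : ℚ) / 2 else 0

/-- v = λ/2 + (Σ_{i=1}^{17} i·e_i)/6. -/
def v : Fin 20 → ℚ := fun j =>
  if j.val = 0 then 1/2 else if j.val ≤ 17 then (j.val : ℚ) / 6 else 0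

/-- M_u = N + ℤu. -/
def Mu : AddSubgroup (Fin 20 → ℚ) := IntLat ⊔ AddSubgroup.zmultiples u

/-- M_v = N + ℤv. -/
def Mv : AddSubgroup (Fin 20 → ℚ) := IntLat ⊔ AddSubgroup.zmultiples v

/-!
Everything about `u` and `v` is read off from one computation in the `A₁₇` chain:
`s = Σ i·eᵢ` satisfies `s·eⱼ = 0` for `j < 17` and `s·e₁₇ = -18`, so `u·w = w₀ - 9w₁₇` and
`v·w = w₀ - 3w₁₇`. The indices are the orders of `u` and `v` modulo `N`.

The two discriminant groups are told apart by `3`-torsion. The class of `s/3` has order `3` in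
`M_u^∨/M_u`. On the other hand, solving the Cartan system of `A₁₇` for `x ∈ M_v^∨` gives
`xⱼ ≡ j·x₁ (mod ℤ)` and `6x₁ ∈ ℤ`, hence `2x ∈ M_v` and `6x ∈ N`: the group `M_v^∨/M_v` is
finite and killed by `2`, so its order is prime to `3`.
-/

section AddCommGroup

variable {G : Type*} [AddCommGroup G]

theorem AddSubgroup.relIndex_zmultiples (H : AddSubgroup G) (z : G) :
    H.relIndex (AddSubgroup.zmultiples z) = addOrderOf (z : G ⧸ H) := by
  have h := (AddSubgroup.zmultiples z).relIndex_ker (QuotientAddGroup.mk' H)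
  rwa [QuotientAddGroup.ker_mk', AddMonoidHom.map_zmultiples, Nat.card_zmultiples] at h

theorem addOrderOf_mk_eq_of_nsmul_mem_iff {H : AddSubgroup G} {z : G} {d : ℕ}
    (h : ∀ n : ℕ, n • z ∈ H ↔ d ∣ n) : addOrderOf (z : G ⧸ H) = d := by
  have key (n : ℕ) : addOrderOf (z : G ⧸ H) ∣ n ↔ d ∣ n := by
    rw [addOrderOf_dvd_iff_nsmul_eq_zero, ← QuotientAddGroup.mk_nsmul,
      QuotientAddGroup.eq_zero_iff, h]
  exact Nat.dvd_antisymm ((key d).2 dvd_rfl) ((key _).1 dvd_rfl)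

theorem nsmul_mem_of_mem_sup_zmultiples {H : AddSubgroup G} {z x : G} {n : ℕ}
    (hz : n • z ∈ H) (hx : x ∈ H ⊔ AddSubgroup.zmultiples z) : n • x ∈ H := by
  obtain ⟨h, hh, _, ⟨k, rfl⟩, rfl⟩ := AddSubgroup.mem_sup.1 hx
  rw [nsmul_add, smul_comm]
  exact add_mem (nsmul_mem hh n) (zsmul_mem hz k)

theorem not_dvd_natCard_of_forall_nsmul_eq_zero [Finite G] {p n : ℕ} [Fact p.Prime]
    (hpn : ¬ p ∣ n) (h : ∀ g : G, n • g = 0) : ¬ p ∣ Nat.card G := fun hp => by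
  obtain ⟨g, hg⟩ := exists_prime_addOrderOf_dvd_card' p hp
  exact hpn (hg ▸ addOrderOf_dvd_of_nsmul_eq_zero (h g))

theorem mem_of_second_difference_mem (S : AddSubgroup G) (f : ℕ → G) (n : ℕ)
    (h0 : f 0 ∈ S) (h1 : f 1 ∈ S) (h : ∀ j < n, f (j + 2) - 2 • f (j + 1) + f j ∈ S) :
    ∀ j ≤ n + 1, f j ∈ S := by
  have pair (j : ℕ) (hj : j ≤ n) : f j ∈ S ∧ f (j + 1) ∈ S := by
    induction j with
    | zero => exact ⟨h0, h1⟩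
    | succ j ih =>
      obtain ⟨hj0, hj1⟩ := ih (by omega)
      have hf : f (j + 2) = (f (j + 2) - 2 • f (j + 1) + f j) + 2 • f (j + 1) - f j := by abel
      exact ⟨hj1, hf ▸ sub_mem (add_mem (h j (by omega)) (nsmul_mem hj1 2)) hj0⟩
  intro j hj
  rcases Nat.lt_or_ge j (n + 1) with hlt | hge
  · exact (pair j (by omega)).1
  · obtain rfl : j = n + 1 := by omega
    exact (pair n le_rfl).2

end AddCommGroup

theorem single_one_mem_IntLat (i : Fin 20) : Pi.single i 1 ∈ IntLat := fun j => by
  rcases eq_or_ne j i with rfl | h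
  · exact ⟨1, by simp⟩
  · exact ⟨0, by simp [h]⟩

theorem relIndex_ne_zero_of_nsmul_mem_IntLat {H : AddSubgroup (Fin 20 → ℚ)} (m : ℕ) [NeZero m]
    (h : ∀ x ∈ H, m • x ∈ IntLat) : IntLat.relIndex H ≠ 0 := by
  have hint (x : H) (i : Fin 20) : ∃ k : ℤ, (m : ℚ) * x.1 i = k := by
    simpa using h x x.2 i
  let φ : H →+ (Fin 20 → ZMod m) :=
    { toFun := fun x i => (⌊(m : ℚ) * x.1 i⌋ : ZMod m)
      map_zero' := by ext; simp
      map_add' := fun x y => by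
        ext i
        obtain ⟨k, hk⟩ := hint x i
        simp [mul_add, hk, Int.floor_intCast_add] }
  have hker : φ.ker ≤ IntLat.addSubgroupOf H := fun x hx i => by
    obtain ⟨k, hk⟩ := hint x i
    have : ((k : ℤ) : ZMod m) = 0 := by simpa [φ, hk] using congrFun hx i
    obtain ⟨l, rfl⟩ := (ZMod.intCast_zmod_eq_zero_iff_dvd k m).1 this
    refine ⟨l, mul_left_cancel₀ (Nat.cast_ne_zero.2 (NeZero.ne m)) (hk.trans ?_)⟩
    push_cast
    ring
  have hφ : φ.ker.index ≠ 0 := by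
    rw [AddSubgroup.index_ker]
    exact Nat.card_pos.ne'
  exact ne_zero_of_dvd_ne_zero hφ (AddSubgroup.index_dvd_of_le hker)

theorem nsmul_mem_IntLat_iff {x : Fin 20 → ℚ} {d : ℕ} (i : Fin 20) (hd : d • x ∈ IntLat)
    (hi : d * x i = 1) (n : ℕ) : n • x ∈ IntLat ↔ d ∣ n := by
  constructor
  · intro hn
    obtain ⟨k, hk⟩ := hn i
    have : (n : ℚ) = d * k := by
      rw [← hk, Pi.smul_apply, nsmul_eq_mul]
      linear_combination -(n : ℚ) * hi
    exact Int.natCast_dvd_natCast.1 ⟨k, by exact_mod_cast this⟩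
  · rintro ⟨k, rfl⟩
    rw [mul_comm, mul_nsmul']
    exact nsmul_mem hd k

theorem relIndex_IntLat_sup_zmultiples (z : Fin 20 → ℚ) :
    IntLat.relIndex (IntLat ⊔ AddSubgroup.zmultiples z) = addOrderOf (z : _ ⧸ IntLat) := by
  rw [AddSubgroup.relIndex_sup_left, AddSubgroup.relIndex_zmultiples]

theorem gramN_isSymm : gramN.IsSymm := by
  ext i j
  by_cases h : i = j
  · subst h; rfl
  · simp [gramN, h, Ne.symm h, or_comm]

theorem form_eq_mulVec_dotProduct (x y : Fin 20 → ℚ) : form x y = gramN *ᵥ x ⬝ᵥ y := by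
  rw [form, dotProduct_mulVec, ← gramN_isSymm.eq, vecMul_transpose, gramN_isSymm.eq]

theorem form_comm (x y : Fin 20 → ℚ) : form x y = form y x := by
  rw [form_eq_mulVec_dotProduct, dotProduct_comm, form]

theorem form_single_one_right (x : Fin 20 → ℚ) (j : Fin 20) :
    form x (Pi.single j 1) = (gramN *ᵥ x) j := by
  rw [form_eq_mulVec_dotProduct, dotProduct_single_one]

theorem form_add_left (x y z : Fin 20 → ℚ) : form (x + y) z = form x z + form y z := by
  simp only [form, add_dotProduct]

theorem form_smul_left (c : ℚ) (x y : Fin 20 → ℚ) : form (c • x) y = c * form x y := by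
  simp only [form, smul_dotProduct, smul_eq_mul]

theorem form_add_right (x y z : Fin 20 → ℚ) : form x (y + z) = form x y + form x z := by
  simp only [form, mulVec_add, dotProduct_add]

theorem form_zsmul_right (x y : Fin 20 → ℚ) (k : ℤ) : form x (k • y) = k * form x y := by
  rw [← Int.cast_smul_eq_zsmul ℚ, form, mulVec_smul, dotProduct_smul, smul_eq_mul, form]

theorem gramN_mulVec_zero (x : Fin 20 → ℚ) : (gramN *ᵥ x) 0 = 2 * x 0 := by
  simp [mulVec, dotProduct, gramN, adj]

theorem gramN_mulVec_of_17_lt (x : Fin 20 → ℚ) (i : Fin 20) (hi : 17 < i.val) :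
    (gramN *ᵥ x) i = -2 * x i := by
  obtain ⟨i, hi20⟩ := i
  obtain rfl | rfl : i = 18 ∨ i = 19 := by simp only at hi; omega
  all_goals simp [mulVec, dotProduct, gramN, adj]

/-- Extended by zero, the rows of `gramN` for `e₁, …, e₁₇`, boundary rows included, become plain
second differences. -/
def chainCoord (x : Fin 20 → ℚ) (n : ℕ) : ℚ :=
  if h : 1 ≤ n ∧ n ≤ 17 then x ⟨n, by omega⟩ else 0

theorem chainCoord_second_difference (x : Fin 20 → ℚ) (j : ℕ) (hj : j < 17) :
    chainCoord x (j + 2) - 2 * chainCoord x (j + 1) + chainCoord x j =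
      (gramN *ᵥ x) ⟨j + 1, by omega⟩ := by
  interval_cases j <;> simp [chainCoord, mulVec, dotProduct, Fin.sum_univ_succ, gramN, adj] <;> ring

theorem mem_dualLat_sup_zmultiples {M : AddSubgroup (Fin 20 → ℚ)} {z x : Fin 20 → ℚ} :
    x ∈ dualLat (M ⊔ AddSubgroup.zmultiples z) ↔ x ∈ dualLat M ∧ ∃ k : ℤ, form x z = k := by
  constructor
  · intro hx
    exact ⟨fun y hy => hx y (AddSubgroup.mem_sup_left hy),
      hx z (AddSubgroup.mem_sup_right (AddSubgroup.mem_zmultiples z))⟩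
  · rintro ⟨hM, k, hk⟩ y hy
    obtain ⟨m, hm, _, ⟨n, rfl⟩, rfl⟩ := AddSubgroup.mem_sup.1 hy
    obtain ⟨l, hl⟩ := hM m hm
    exact ⟨l + n * k, by rw [form_add_right, form_zsmul_right, hl, hk]; push_cast; ring⟩

theorem disc_mk_eq_zero_iff {M : AddSubgroup (Fin 20 → ℚ)} (x : dualLat M) :
    (x : disc M) = 0 ↔ (x : Fin 20 → ℚ) ∈ M := by
  rw [QuotientAddGroup.eq_zero_iff, AddSubgroup.mem_addSubgroupOf]

section DualIntLat

variable {x : Fin 20 → ℚ}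

theorem gramN_mulVec_apply_of_mem_dualLat (hx : x ∈ dualLat IntLat) (j : Fin 20) :
    ∃ k : ℤ, (gramN *ᵥ x) j = k :=
  form_single_one_right x j ▸ hx _ (single_one_mem_IntLat j)

theorem chainCoord_sub_of_mem_dualLat (hx : x ∈ dualLat IntLat) :
    ∀ j ≤ 18, ∃ k : ℤ, chainCoord x j - j * chainCoord x 1 = k := by
  have key := mem_of_second_difference_mem (Int.castAddHom ℚ).range
    (fun j => chainCoord x j - j * chainCoord x 1) 17 ⟨0, by simp [chainCoord]⟩ ⟨0, by simp⟩
    fun j hj => by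
      obtain ⟨k, hk⟩ := gramN_mulVec_apply_of_mem_dualLat hx ⟨j + 1, by omega⟩
      refine ⟨k, ?_⟩
      simp only [Int.coe_castAddHom, ← hk, ← chainCoord_second_difference x j hj]
      push_cast
      ring
  intro j hj
  obtain ⟨k, hk⟩ := key j hj
  exact ⟨k, hk.symm⟩

theorem eighteen_mul_apply_one_of_mem_dualLat (hx : x ∈ dualLat IntLat) :
    ∃ k : ℤ, 18 * x 1 = k := by
  obtain ⟨k, hk⟩ := chainCoord_sub_of_mem_dualLat hx 18 le_rfl
  exact ⟨-k, by simp [chainCoord] at hk; push_cast; linarith⟩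

theorem sub_mul_apply_one_of_mem_dualLat (hx : x ∈ dualLat IntLat) (j : Fin 20)
    (h1 : 1 ≤ j.val) (h17 : j.val ≤ 17) : ∃ k : ℤ, x j - j.val * x 1 = k := by
  simpa [chainCoord, h1, h17] using chainCoord_sub_of_mem_dualLat hx j.val (by omega)

end DualIntLat

/-- `Σ_{i=1}^{17} i·eᵢ`; the coordinate `0` of `λ` gets weight `0`. -/
def weightedRootSum : Fin 20 → ℚ := fun j => if j.val ≤ 17 then j.val else 0

theorem weightedRootSum_mem_IntLat : weightedRootSum ∈ IntLat := fun j => by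
  by_cases h : j.val ≤ 17
  · exact ⟨j.val, by simp [weightedRootSum, h]⟩
  · exact ⟨0, by simp [weightedRootSum, h]⟩

theorem gramN_mulVec_weightedRootSum : gramN *ᵥ weightedRootSum = Pi.single 17 (-18) := by
  ext i
  fin_cases i <;>
    simp [mulVec, dotProduct, Fin.sum_univ_succ, gramN, adj, weightedRootSum] <;> norm_num

theorem form_single_zero_left (w : Fin 20 → ℚ) : form (Pi.single 0 1) w = 2 * w 0 := by
  rw [form, single_one_dotProduct, gramN_mulVec_zero]

theorem form_weightedRootSum_left (w : Fin 20 → ℚ) : form weightedRootSum w = -18 * w 17 := by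
  rw [form_eq_mulVec_dotProduct, gramN_mulVec_weightedRootSum, single_dotProduct]

theorem u_eq : u = (2 : ℚ)⁻¹ • (Pi.single 0 1 + weightedRootSum) := by
  ext ⟨j, hj⟩
  rcases Nat.eq_zero_or_pos j with rfl | hj0
  · simp [u, weightedRootSum]
  · have hne : (⟨j, hj⟩ : Fin 20) ≠ 0 := Fin.ne_of_val_ne (by simp; omega)
    simp [u, weightedRootSum, hne, hj0.ne']
    split_ifs <;> ring

theorem v_eq : v = (6 : ℚ)⁻¹ • (3 • Pi.single 0 1 + weightedRootSum) := by
  ext ⟨j, hj⟩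
  rcases Nat.eq_zero_or_pos j with rfl | hj0
  · simp [v, weightedRootSum]
    norm_num
  · have hne : (⟨j, hj⟩ : Fin 20) ≠ 0 := Fin.ne_of_val_ne (by simp; omega)
    simp [v, weightedRootSum, hne, hj0.ne']
    split_ifs <;> ring

theorem form_u_left (w : Fin 20 → ℚ) : form u w = w 0 - 9 * w 17 := by
  rw [u_eq, form_smul_left, form_add_left, form_single_zero_left, form_weightedRootSum_left]
  ring

theorem form_v_left (w : Fin 20 → ℚ) : form v w = w 0 - 3 * w 17 := by
  rw [v_eq, form_smul_left, form_add_left, ← Nat.cast_smul_eq_nsmul ℚ, form_smul_left,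
    form_single_zero_left, form_weightedRootSum_left]
  push_cast
  ring

theorem u_mem_dualLat_IntLat : u ∈ dualLat IntLat := fun w hw => by
  obtain ⟨a, ha⟩ := hw 0
  obtain ⟨b, hb⟩ := hw 17
  exact ⟨a - 9 * b, by rw [form_u_left, ha, hb]; push_cast; ring⟩

theorem v_mem_dualLat_IntLat : v ∈ dualLat IntLat := fun w hw => by
  obtain ⟨a, ha⟩ := hw 0
  obtain ⟨b, hb⟩ := hw 17
  exact ⟨a - 3 * b, by rw [form_v_left, ha, hb]; push_cast; ring⟩

theorem two_nsmul_u : 2 • u = Pi.single 0 1 + weightedRootSum := by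
  rw [u_eq, ← Nat.cast_smul_eq_nsmul ℚ, Nat.cast_ofNat, smul_inv_smul₀ (by norm_num)]

theorem six_nsmul_v : 6 • v = 3 • Pi.single 0 1 + weightedRootSum := by
  rw [v_eq, ← Nat.cast_smul_eq_nsmul ℚ, Nat.cast_ofNat, smul_inv_smul₀ (by norm_num)]

theorem nsmul_u_mem_IntLat_iff (n : ℕ) : n • u ∈ IntLat ↔ 2 ∣ n :=
  nsmul_mem_IntLat_iff 1
    (two_nsmul_u ▸ add_mem (single_one_mem_IntLat 0) weightedRootSum_mem_IntLat)
    (by norm_num [u]) n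

theorem nsmul_v_mem_IntLat_iff (n : ℕ) : n • v ∈ IntLat ↔ 6 ∣ n :=
  nsmul_mem_IntLat_iff 1
    (six_nsmul_v ▸ add_mem (nsmul_mem (single_one_mem_IntLat 0) 3) weightedRootSum_mem_IntLat)
    (by norm_num [v]) n

theorem relIndex_IntLat_Mu : IntLat.relIndex Mu = 2 := by
  rw [Mu, relIndex_IntLat_sup_zmultiples,
    addOrderOf_mk_eq_of_nsmul_mem_iff nsmul_u_mem_IntLat_iff]

theorem relIndex_IntLat_Mv : IntLat.relIndex Mv = 6 := by
  rw [Mv, relIndex_IntLat_sup_zmultiples,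
    addOrderOf_mk_eq_of_nsmul_mem_iff nsmul_v_mem_IntLat_iff]

theorem third_weightedRootSum_mem_dualLat_Mu : (3 : ℚ)⁻¹ • weightedRootSum ∈ dualLat Mu := by
  refine mem_dualLat_sup_zmultiples.2 ⟨fun w hw => ?_, -51, ?_⟩
  · obtain ⟨k, hk⟩ := hw 17
    exact ⟨-6 * k, by rw [form_smul_left, form_weightedRootSum_left, hk]; push_cast; ring⟩
  · rw [form_smul_left, form_weightedRootSum_left]
    norm_num [u]

theorem third_weightedRootSum_not_mem_Mu : (3 : ℚ)⁻¹ • weightedRootSum ∉ Mu := fun h => by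
  obtain ⟨k, hk⟩ := nsmul_mem_of_mem_sup_zmultiples ((nsmul_u_mem_IntLat_iff 2).2 dvd_rfl) h 1
  have hk' : (2 : ℚ) = 3 * k := by
    norm_num [weightedRootSum] at hk
    linarith
  have : (2 : ℤ) = 3 * k := by exact_mod_cast hk'
  omega

theorem three_dvd_card_disc_Mu : 3 ∣ Nat.card (disc Mu) := by
  have : Fact (Nat.Prime 3) := ⟨Nat.prime_three⟩
  let x : dualLat Mu := ⟨_, third_weightedRootSum_mem_dualLat_Mu⟩
  have h3 : 3 • (x : disc Mu) = 0 := by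
    rw [← QuotientAddGroup.mk_nsmul, disc_mk_eq_zero_iff, AddSubgroup.coe_nsmul,
      ← Nat.cast_smul_eq_nsmul ℚ, Nat.cast_ofNat, smul_inv_smul₀ (by norm_num)]
    exact AddSubgroup.mem_sup_left weightedRootSum_mem_IntLat
  have hne : (x : disc Mu) ≠ 0 := (disc_mk_eq_zero_iff x).not.2 third_weightedRootSum_not_mem_Mu
  exact addOrderOf_eq_prime h3 hne ▸ addOrderOf_dvd_natCard _

theorem exists_two_nsmul_sub_zsmul_v_mem_IntLat {x : Fin 20 → ℚ} (hx : x ∈ dualLat Mv) :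
    ∃ t : ℤ, 2 • (x - t • v) ∈ IntLat := by
  obtain ⟨hxN, c, hc⟩ := mem_dualLat_sup_zmultiples.1 hx
  obtain ⟨a, ha⟩ := gramN_mulVec_apply_of_mem_dualLat hxN 0
  obtain ⟨b, hb⟩ := sub_mul_apply_one_of_mem_dualLat hxN 17 (by decide) (by decide)
  obtain ⟨d, hd⟩ := eighteen_mul_apply_one_of_mem_dualLat hxN
  rw [gramN_mulVec_zero] at ha
  norm_num at hb
  rw [form_comm, form_v_left] at hc
  obtain ⟨t, ht⟩ : ∃ t : ℤ, 6 * x 1 = t := ⟨2 * c - a + 6 * b + 6 * d, by push_cast; linarith⟩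
  refine ⟨t, fun ⟨i, hi⟩ => ?_⟩
  show ∃ k : ℤ, 2 • (x ⟨i, hi⟩ - t • v ⟨i, hi⟩) = k
  rw [nsmul_eq_mul, zsmul_eq_mul]
  rcases (by omega : i = 0 ∨ (1 ≤ i ∧ i ≤ 17) ∨ 17 < i) with rfl | ⟨h1, h17⟩ | h17
  · exact ⟨a - t, by norm_num [v]; linarith⟩
  · obtain ⟨k, hk⟩ := sub_mul_apply_one_of_mem_dualLat hxN ⟨i, hi⟩ h1 h17
    refine ⟨2 * k, ?_⟩
    have hi0 : i ≠ 0 := by omega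
    simp only at hk
    simp only [v, hi0, h17, if_false, if_true]
    push_cast
    linear_combination 2 * hk + (i : ℚ) / 3 * ht
  · obtain ⟨k, hk⟩ := gramN_mulVec_apply_of_mem_dualLat hxN ⟨i, hi⟩
    rw [gramN_mulVec_of_17_lt x _ h17] at hk
    have hi0 : i ≠ 0 := by omega
    have hi17 : ¬ i ≤ 17 := by omega
    exact ⟨-k, by simp only [v, hi0, hi17, if_false]; push_cast; linarith⟩

theorem two_nsmul_mem_Mv_of_mem_dualLat {x : Fin 20 → ℚ} (hx : x ∈ dualLat Mv) : 2 • x ∈ Mv := by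
  obtain ⟨t, ht⟩ := exists_two_nsmul_sub_zsmul_v_mem_IntLat hx
  have h : 2 • x = 2 • (x - t • v) + (2 * t) • v := by module
  rw [h]
  exact add_mem (AddSubgroup.mem_sup_left ht)
    (AddSubgroup.mem_sup_right (AddSubgroup.zsmul_mem_zmultiples v _))

theorem six_nsmul_mem_IntLat_of_mem_dualLat {x : Fin 20 → ℚ} (hx : x ∈ dualLat Mv) :
    6 • x ∈ IntLat := by
  obtain ⟨t, ht⟩ := exists_two_nsmul_sub_zsmul_v_mem_IntLat hx
  have h : 6 • x = 3 • 2 • (x - t • v) + t • 6 • v := by module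
  rw [h]
  exact add_mem (nsmul_mem ht 3) (zsmul_mem ((nsmul_v_mem_IntLat_iff 6).2 dvd_rfl) t)

theorem finite_disc_Mv : Finite (disc Mv) :=
  Nat.finite_of_card_ne_zero <| ne_zero_of_dvd_ne_zero
    (relIndex_ne_zero_of_nsmul_mem_IntLat 6 fun _ hx => six_nsmul_mem_IntLat_of_mem_dualLat hx)
    (AddSubgroup.relIndex_dvd_of_le_left (dualLat Mv) (le_sup_left : IntLat ≤ Mv))

theorem not_three_dvd_card_disc_Mv : ¬ 3 ∣ Nat.card (disc Mv) := by
  have := finite_disc_Mv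
  have : Fact (Nat.Prime 3) := ⟨Nat.prime_three⟩
  refine not_dvd_natCard_of_forall_nsmul_eq_zero (n := 2) (by norm_num) fun g => ?_
  induction g using QuotientAddGroup.induction_on with | H x => ?_
  rw [← QuotientAddGroup.mk_nsmul, disc_mk_eq_zero_iff, AddSubgroup.coe_nsmul]
  exact two_nsmul_mem_Mv_of_mem_dualLat x.2

/-- u and v pair integrally with N and have even square, the
overlattices N + ℤu and N + ℤv have indices 2 and 6 over N respectively, and
consequently their discriminant groups have different orders. -/
theorem A17_2A1_Zariski_pair :
    (∀ w ∈ IntLat, ∃ k : ℤ, form u w = (k : ℚ)) ∧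
    (∀ w ∈ IntLat, ∃ k : ℤ, form v w = (k : ℚ)) ∧
    (∃ k : ℤ, form u u = 2 * (k : ℚ)) ∧
    (∃ k : ℤ, form v v = 2 * (k : ℚ)) ∧
    IntLat.relIndex Mu = 2 ∧
    IntLat.relIndex Mv = 6 ∧
    Nat.card (disc Mu) ≠ Nat.card (disc Mv) :=
  ⟨u_mem_dualLat_IntLat, v_mem_dualLat_IntLat,
    ⟨-38, by rw [form_u_left]; norm_num [u]⟩, ⟨-4, by rw [form_v_left]; norm_num [v]⟩,
    relIndex_IntLat_Mu, relIndex_IntLat_Mv,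
    fun h => not_three_dvd_card_disc_Mv (h ▸ three_dvd_card_disc_Mu)⟩
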